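/- Let (X,d) be a metric space with a Borel regular doubling measure μ with constant C_d ≥ 1, let Ω ⊂ X be nonempty open with X∖Ω ≠ ∅, let λ ≥ 1, and let {B_k}_{k∈ℕ} with subordinate partition of unity {φ_k}_{k∈ℕ} be a Whitney covering of Ω with parameter λ and overlap constant C₀. Then there is a constant C depending only on C_d and C₀ such that for every u ∈ L¹_loc(Ω), every a ∈ ℝ, every z ∈ ∂Ω, and every r > 0, the discrete convolution u_W := Σ_k u_{B_k}·φ_k satisfies ∫_{B(z,r)∩Ω} |u_W − a| dμ ≤ C·∫_{B(z,2r)∩Ω} |u − a| dμ. -/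

import Mathlib

open Metric MeasureTheory

/-- A Whitney covering of an open set `Ω` with parameter `lam`, overlap constant `C₀`
and partition-of-unity Lipschitz parameter `c`, together with a subordinate partition
of unity. -/
structure WhitneyCovering (X : Type*) [MetricSpace X] (Ω : Set X)
    (lam : ℝ) (C₀ : ℕ) (c : ℝ) where
  center : ℕ → X
  radius : ℕ → ℝ
  phi : ℕ → X → ℝ
  center_mem : ∀ j, center j ∈ Ω
  radius_eq : ∀ j, radius j = infDist (center j) Ωᶜ / (100 * lam)
  covers : Ω = ⋃ j, ball (center j) (radius j)
  overlap : ∀ k, {j | (ball (center k) (20 * lam * radius k) ∩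
      ball (center j) (20 * lam * radius j)).Nonempty}.encard ≤ (C₀ : ℕ∞)
  radius_le : ∀ k j, (ball (center k) (20 * lam * radius k) ∩
      ball (center j) (20 * lam * radius j)).Nonempty → radius j ≤ 2 * radius k
  phi_nonneg : ∀ j p, 0 ≤ phi j p
  phi_le_one : ∀ j p, phi j p ≤ 1
  phi_lip : ∀ j p q, |phi j p - phi j q| ≤ (c / radius j) * dist p q
  phi_supp : ∀ j, Function.support (phi j) ⊆ ball (center j) (2 * radius j)
  phi_sum : ∀ p ∈ Ω, ∑' j, phi j p = 1

/-- The discrete convolution `u_W = Σ_j u_{B_j} φ_j` of `u` with respect to a Whitney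
covering. -/
noncomputable def discreteConv {X : Type*} [MetricSpace X] [MeasurableSpace X]
    (μ : Measure X) {Ω : Set X} {lam : ℝ} {C₀ : ℕ} {c : ℝ}
    (W : WhitneyCovering X Ω lam C₀ c) (u : X → ℝ) : X → ℝ :=
  fun p => ∑' j, (⨍ y in ball (W.center j) (W.radius j), u y ∂μ) * W.phi j p

open Set
open scoped ENNReal NNReal

/-!
On `Ω` the partition of unity gives `|u_W - a| ≤ ∑ⱼ |u_{B_j} - a| φ_j`. On `B(z,r)` only the
indices with `2B_j ∩ B(z,r) ≠ ∅` contribute, and since `z ∉ Ω` their radii are at most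
`d(x_j,z)/100`, so these `B_j` lie in `B(z,2r) ∩ Ω`. Each contributing term integrates to at most
`|u_{B_j} - a| μ(2B_j) ≤ C_d ∫_{B_j} |u - a|`, and the bounded overlap of the `B_j` sums these to
`C_d C₀ ∫_{B(z,2r) ∩ Ω} |u - a|`. A doubling measure makes `X` separable, so a function locally
integrable on `Ω` is a.e.-measurable there, and a finite right-hand side then makes it integrable
on the contributing `B_j`.
-/

lemma enorm_tsum_mul_sub_le {ι : Type*} {v φ : ι → ℝ} (hfin : (Function.support φ).Finite)
    (hsum : ∑' i, φ i = 1) (a : ℝ) :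
    ‖∑' i, v i * φ i - a‖ₑ ≤ ∑' i, ‖v i - a‖ₑ * ‖φ i‖ₑ := by
  set t := hfin.toFinset
  have hzero : ∀ i ∉ t, φ i = 0 := fun i hi => by simpa [t] using hi
  have hsum_t : ∑ i ∈ t, φ i = 1 := by rwa [← tsum_eq_sum (L := .unconditional ι) hzero]
  have hconv : ∑' i, v i * φ i - a = ∑ i ∈ t, (v i - a) * φ i := by
    rw [tsum_eq_sum (L := .unconditional ι) (s := t) fun i hi => by simp [hzero i hi]]
    simp only [sub_mul, Finset.sum_sub_distrib, ← Finset.mul_sum, hsum_t, mul_one]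
  calc ‖∑' i, v i * φ i - a‖ₑ = ‖∑ i ∈ t, (v i - a) * φ i‖ₑ := by rw [hconv]
    _ ≤ ∑ i ∈ t, ‖(v i - a) * φ i‖ₑ := enorm_sum_le _ _
    _ = ∑ i ∈ t, ‖v i - a‖ₑ * ‖φ i‖ₑ := by simp only [enorm_mul]
    _ ≤ ∑' i, ‖v i - a‖ₑ * ‖φ i‖ₑ := ENNReal.sum_le_tsum t

section Integration

variable {X : Type*} [MeasurableSpace X] {μ : Measure X}

lemma MeasureTheory.IntegrableOn.of_lintegral_enorm_sub_ne_top {s : Set X} {u : X → ℝ} {a : ℝ}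
    (hu : AEStronglyMeasurable u (μ.restrict s)) (hs : μ s ≠ ⊤)
    (h : ∫⁻ x in s, ‖u x - a‖ₑ ∂μ ≠ ⊤) : IntegrableOn u s μ := by
  have hsub : IntegrableOn (fun x => u x - a) s μ :=
    ⟨hu.sub aestronglyMeasurable_const, h.lt_top⟩
  have hu_eq : u = fun x => (u x - a) + a := by simp
  exact hu_eq ▸ hsub.add (integrableOn_const hs)

lemma enorm_setAverage_sub_mul_le {s : Set X} {u : X → ℝ} (hu : IntegrableOn u s μ)
    (hs : μ s ≠ ⊤) (a : ℝ) :
    ‖(⨍ x in s, u x ∂μ) - a‖ₑ * μ s ≤ ∫⁻ x in s, ‖u x - a‖ₑ ∂μ := by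
  have hint : μ.real s • ((⨍ x in s, u x ∂μ) - a) = ∫ x in s, (u x - a) ∂μ := by
    rw [smul_sub, measure_smul_setAverage _ hs, integral_sub hu (integrableOn_const hs),
      setIntegral_const]
  calc ‖(⨍ x in s, u x ∂μ) - a‖ₑ * μ s = ‖μ.real s • ((⨍ x in s, u x ∂μ) - a)‖ₑ := by
        rw [enorm_smul, mul_comm, Real.enorm_of_nonneg measureReal_nonneg, measureReal_def,
          ENNReal.ofReal_toReal hs]
    _ ≤ ∫⁻ x in s, ‖u x - a‖ₑ ∂μ := hint ▸ enorm_integral_le_lintegral_enorm _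

lemma setLIntegral_enorm_le_measure {φ : X → ℝ} {s t : Set X} (hφ : ∀ x, |φ x| ≤ 1)
    (hsupp : Function.support φ ⊆ t) : ∫⁻ x in s, ‖φ x‖ₑ ∂μ ≤ μ t := by
  calc ∫⁻ x in s, ‖φ x‖ₑ ∂μ ≤ ∫⁻ x, t.indicator 1 x ∂μ := by
        refine (setLIntegral_le_lintegral s _).trans (lintegral_mono fun x => ?_)
        by_cases hx : x ∈ t
        · simpa [hx, Real.enorm_eq_ofReal_abs] using hφ x
        · simp [hx, Function.notMem_support.1 fun h => hx (hsupp h)]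
    _ ≤ μ t := lintegral_indicator_one_le t

lemma tsum_setLIntegral_le_mul_lintegral {ι : Type*} [Countable ι] {s : ι → Set X}
    (hs : ∀ i, MeasurableSet (s i)) {N : ℕ} (hN : ∀ x, {i | x ∈ s i}.encard ≤ N)
    {f : X → ℝ≥0∞} (hf : AEMeasurable f μ) :
    ∑' i, ∫⁻ x in s i, f x ∂μ ≤ N * ∫⁻ x, f x ∂μ := by
  have hpt : ∀ x, ∑' i, (s i).indicator f x ≤ N * f x := fun x => by
    calc ∑' i, (s i).indicator f x = ∑' _ : {i | x ∈ s i}, f x := by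
          rw [tsum_subtype {i | x ∈ s i} fun _ => f x]; congr 1 with i
      _ = {i | x ∈ s i}.encard * f x := ENNReal.tsum_set_const _ _
      _ ≤ N * f x := by gcongr; exact_mod_cast hN x
  calc ∑' i, ∫⁻ x in s i, f x ∂μ = ∑' i, ∫⁻ x, (s i).indicator f x ∂μ := by
        simp only [lintegral_indicator (hs _)]
    _ = ∫⁻ x, ∑' i, (s i).indicator f x ∂μ :=
        (lintegral_tsum fun i => hf.indicator (hs i)).symm
    _ ≤ ∫⁻ x, N * f x ∂μ := lintegral_mono hpt
    _ = N * ∫⁻ x, f x ∂μ := lintegral_const_mul' _ _ (ENNReal.natCast_ne_top N)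

end Integration

section Doubling

variable {X : Type*} [MetricSpace X] [MeasurableSpace X] {μ : Measure X} {D : ℝ≥0}

lemma measure_ball_two_pow_mul_le
    (hD : ∀ x (r : ℝ), 0 < r → μ (ball x (2 * r)) ≤ D * μ (ball x r)) (x : X) {r : ℝ}
    (hr : 0 < r) (k : ℕ) : μ (ball x (2 ^ k * r)) ≤ D ^ k * μ (ball x r) := by
  induction k with
  | zero => simp
  | succ k ih =>
    calc μ (ball x (2 ^ (k + 1) * r)) = μ (ball x (2 * (2 ^ k * r))) := by ring_nf
      _ ≤ D * μ (ball x (2 ^ k * r)) := hD x _ (by positivity)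
      _ ≤ D * (D ^ k * μ (ball x r)) := by gcongr
      _ = D ^ (k + 1) * μ (ball x r) := by ring

lemma exists_measure_ball_le_pow_mul
    (hD : ∀ x (r : ℝ), 0 < r → μ (ball x (2 * r)) ≤ D * μ (ball x r)) (R : ℝ) {r : ℝ}
    (hr : 0 < r) : ∃ k : ℕ, ∀ x y, dist x y < R → μ (ball x R) ≤ D ^ k * μ (ball y r) := by
  obtain ⟨k, hk⟩ := pow_unbounded_of_one_lt (2 * R / r) one_lt_two
  refine ⟨k, fun x y hxy => ?_⟩
  refine (measure_mono fun w hw => ?_).trans (measure_ball_two_pow_mul_le hD y hr k)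
  rw [div_lt_iff₀ hr] at hk
  rw [mem_ball] at hw ⊢
  linarith [dist_triangle w x y]

variable [OpensMeasurableSpace X]

lemma exists_card_le_of_isSeparated_subset_ball
    (hD : ∀ x (r : ℝ), 0 < r → μ (ball x (2 * r)) ≤ D * μ (ball x r))
    (x₀ : X) (R : ℝ) {ε : ℝ≥0} (hε : 0 < ε) (h₀ : μ (ball x₀ (R + ε)) ≠ 0)
    (hfin : μ (ball x₀ (R + ε)) ≠ ⊤) :
    ∃ N : ℕ, ∀ t : Finset X, ↑t ⊆ ball x₀ R → IsSeparated ε (t : Set X) → t.card ≤ N := by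
  obtain ⟨k, hk⟩ := exists_measure_ball_le_pow_mul hD (R + ε) (r := ε / 2) (by positivity)
  refine ⟨⌈D ^ k⌉₊, fun t ht hsep => ?_⟩
  set U := ball x₀ (R + ε)
  have hdisj : (t : Set X).PairwiseDisjoint fun y => ball y (ε / 2) := by
    intro y hy y' hy' hne
    refine disjoint_left.2 fun w hw hw' => ?_
    have hyy' : (ε : ℝ≥0∞) < edist y y' := hsep hy hy' hne
    rw [edist_nndist, ENNReal.coe_lt_coe, ← NNReal.coe_lt_coe, coe_nndist] at hyy'
    rw [mem_ball] at hw hw'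
    linarith [dist_triangle_left y y' w]
  have hsub : ∀ y ∈ t, ball y (ε / 2) ⊆ U := fun y hy => by
    refine ball_subset_ball' ?_
    linarith [mem_ball.1 (ht hy), ε.coe_nonneg]
  have hlow : ∀ y ∈ t, μ U ≤ D ^ k * μ (ball y (ε / 2)) := fun y hy => by
    refine hk x₀ y ?_
    linarith [mem_ball'.1 (ht hy), ε.coe_nonneg]
  have hcard : (t.card : ℝ≥0∞) * μ U ≤ (D ^ k : ℝ≥0) * μ U :=
    calc (t.card : ℝ≥0∞) * μ U = ∑ y ∈ t, μ U := by simp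
      _ ≤ ∑ y ∈ t, D ^ k * μ (ball y (ε / 2)) := Finset.sum_le_sum hlow
      _ = D ^ k * μ (⋃ y ∈ t, ball y (ε / 2)) := by
        rw [measure_biUnion_finset hdisj fun y _ => measurableSet_ball, Finset.mul_sum]
      _ ≤ D ^ k * μ U := by gcongr; exact iUnion₂_subset hsub
      _ = _ := by push_cast; rfl
  rw [ENNReal.mul_le_mul_iff_left h₀ hfin] at hcard
  exact Nat.cast_le.1 ((ENNReal.coe_le_coe.1 (by simpa using hcard)).trans (Nat.le_ceil _))

lemma packingNumber_ball_ne_top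
    (hD : ∀ x (r : ℝ), 0 < r → μ (ball x (2 * r)) ≤ D * μ (ball x r))
    (hpos : ∀ x (r : ℝ), 0 < r → μ (ball x r) ≠ 0)
    (hfin : ∀ x (r : ℝ), 0 < r → μ (ball x r) ≠ ⊤)
    (x₀ : X) {R : ℝ} (hR : 0 ≤ R) {ε : ℝ≥0} (hε : 0 < ε) : packingNumber ε (ball x₀ R) ≠ ⊤ := by
  have hRε : 0 < R + ε := by positivity
  obtain ⟨N, hN⟩ := exists_card_le_of_isSeparated_subset_ball hD x₀ R hε (hpos x₀ _ hRε)
    (hfin x₀ _ hRε)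
  refine ne_top_of_le_ne_top (ENat.natCast_ne_top N)
    (iSup₂_le fun C hC => iSup_le fun hsep => ?_)
  by_contra! hlt
  obtain ⟨t, htC, htcard⟩ := exists_subset_encard_eq (Order.add_one_le_of_lt hlt)
  have htfin : t.Finite := finite_of_encard_eq_coe htcard
  lift t to Finset X using htfin
  rw [encard_coe_eq_coe_finsetCard] at htcard
  have := hN t (htC.trans hC) (hsep.subset htC)
  norm_cast at htcard
  omega

theorem secondCountableTopology_of_measure_ball_le
    (hD : ∀ x (r : ℝ), 0 < r → μ (ball x (2 * r)) ≤ D * μ (ball x r))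
    (hpos : ∀ x (r : ℝ), 0 < r → μ (ball x r) ≠ 0)
    (hfin : ∀ x (r : ℝ), 0 < r → μ (ball x r) ≠ ⊤) :
    SecondCountableTopology X := by
  refine secondCountable_of_almost_dense_set fun ε hε => ?_
  rcases isEmpty_or_nonempty X with hX | ⟨⟨x₀⟩⟩
  · exact ⟨∅, countable_empty, fun x => isEmptyElim x⟩
  lift ε to ℝ≥0 using hε.le
  have hpack (n : ℕ) :=
    packingNumber_ball_ne_top hD hpos hfin x₀ n.cast_nonneg (NNReal.coe_pos.1 hε)
  refine ⟨⋃ n : ℕ, maximalSeparatedSet ε (ball x₀ n), countable_iUnion fun n => ?_, fun x => ?_⟩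
  · exact (encard_ne_top_iff.1 (encard_maximalSeparatedSet (hpack n) ▸ hpack n)).countable
  · obtain ⟨n, hn⟩ := exists_nat_gt (dist x x₀)
    obtain ⟨y, hy, hxy⟩ := isCover_maximalSeparatedSet (hpack n) (mem_ball.2 hn)
    have hxy : edist x y ≤ ε := hxy
    rw [edist_nndist, ENNReal.coe_le_coe, ← NNReal.coe_le_coe, coe_nndist] at hxy
    exact ⟨y, mem_iUnion.2 ⟨n, hy⟩, hxy⟩

end Doubling

namespace WhitneyCovering

variable {X : Type*} [MetricSpace X] {Ω : Set X} {lam : ℝ} {C₀ : ℕ} {c : ℝ}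
  (W : WhitneyCovering X Ω lam C₀ c)

lemma radius_nonneg (hlam : 0 ≤ lam) (j : ℕ) : 0 ≤ W.radius j := by
  rw [W.radius_eq]
  exact div_nonneg infDist_nonneg (by positivity)

lemma radius_pos (hΩ : IsOpen Ω) (hΩc : Ωᶜ.Nonempty) (hlam : 0 < lam) (j : ℕ) :
    0 < W.radius j := by
  rw [W.radius_eq]
  refine div_pos ?_ (by positivity)
  exact (hΩ.isClosed_compl.notMem_iff_infDist_pos hΩc).1 (notMem_compl_iff.2 (W.center_mem j))

lemma ball_subset (j : ℕ) : ball (W.center j) (W.radius j) ⊆ Ω :=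
  fun _ hp => W.covers.ge (mem_iUnion.2 ⟨j, hp⟩)

lemma phi_eq_zero_of_notMem {j : ℕ} {p : X} (hp : p ∉ ball (W.center j) (2 * W.radius j)) :
    W.phi j p = 0 :=
  Function.notMem_support.1 fun h => hp (W.phi_supp j h)

lemma continuous_phi (j : ℕ) : Continuous (W.phi j) :=
  (LipschitzWith.of_dist_le' (K := c / W.radius j) (W.phi_lip j)).continuous

lemma encard_setOf_mem_ball_two_mul_le (hlam : 1 ≤ lam) (p : X) :
    {j | p ∈ ball (W.center j) (2 * W.radius j)}.encard ≤ C₀ := by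
  rcases eq_empty_or_nonempty {j | p ∈ ball (W.center j) (2 * W.radius j)} with h | ⟨k, hk⟩
  · rw [h, encard_empty]
    exact zero_le
  have hsub : ∀ j,
      ball (W.center j) (2 * W.radius j) ⊆ ball (W.center j) (20 * lam * W.radius j) := fun j =>
    ball_subset_ball (by nlinarith [W.radius_nonneg (by linarith) j])
  refine (encard_mono fun j hj => ?_).trans (W.overlap k)
  exact ⟨p, hsub k hk, hsub j hj⟩

lemma encard_setOf_mem_ball_le (hlam : 1 ≤ lam) (p : X) :
    {j | p ∈ ball (W.center j) (W.radius j)}.encard ≤ C₀ := by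
  refine (encard_mono fun j (hj : p ∈ ball _ _) => ?_).trans
    (W.encard_setOf_mem_ball_two_mul_le hlam p)
  exact ball_subset_ball (by linarith [W.radius_nonneg (by linarith) j]) hj

lemma finite_support_phi (hlam : 1 ≤ lam) (p : X) :
    (Function.support fun j => W.phi j p).Finite :=
  (encard_lt_top_iff.1 ((W.encard_setOf_mem_ball_two_mul_le hlam p).trans_lt
    (ENat.natCast_lt_top C₀))).subset fun j hj => W.phi_supp j hj

lemma ball_subset_of_nonempty_inter (hlam : 1 ≤ lam) {z : X} (hz : z ∉ Ω) {r : ℝ} {j : ℕ}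
    (h : (ball (W.center j) (2 * W.radius j) ∩ ball z r).Nonempty) :
    ball (W.center j) (W.radius j) ⊆ ball z (2 * r) ∩ Ω := by
  obtain ⟨q, hqj, hqz⟩ := h
  have hrad : W.radius j ≤ dist (W.center j) z / 100 := by
    calc W.radius j ≤ infDist (W.center j) Ωᶜ / 100 := by
          rw [W.radius_eq]
          exact div_le_div_of_nonneg_left infDist_nonneg (by norm_num) (by linarith)
      _ ≤ dist (W.center j) z / 100 := by gcongr; exact infDist_le_dist_of_mem hz
  refine fun y hy => ⟨?_, W.ball_subset j hy⟩
  rw [mem_ball] at hqj hqz hy ⊢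
  linarith [dist_triangle y (W.center j) z, dist_triangle_left (W.center j) z q,
    W.radius_nonneg (by linarith) j]

variable [MeasurableSpace X] {μ : Measure X}

lemma enorm_discreteConv_sub_le (hlam : 1 ≤ lam) (u : X → ℝ) (a : ℝ) {p : X} (hp : p ∈ Ω) :
    ‖discreteConv μ W u p - a‖ₑ ≤
      ∑' j, ‖(⨍ y in ball (W.center j) (W.radius j), u y ∂μ) - a‖ₑ * ‖W.phi j p‖ₑ :=
  enorm_tsum_mul_sub_le (W.finite_support_phi hlam p) (W.phi_sum p hp) a

variable [OpensMeasurableSpace X] {D : ℝ≥0}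

lemma setLIntegral_enorm_average_sub_mul_phi_le (hΩ : IsOpen Ω) (hΩc : Ωᶜ.Nonempty)
    (hlam : 1 ≤ lam) (hD : ∀ x (r : ℝ), 0 < r → μ (ball x (2 * r)) ≤ D * μ (ball x r))
    (hfin : ∀ x (r : ℝ), 0 < r → μ (ball x r) ≠ ⊤) {u : X → ℝ}
    (hu : AEStronglyMeasurable u (μ.restrict Ω)) {a : ℝ} {z : X} (hz : z ∉ Ω) {r : ℝ}
    (hT : ∫⁻ p in ball z (2 * r) ∩ Ω, ‖u p - a‖ₑ ∂μ ≠ ⊤) (j : ℕ) :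
    ∫⁻ p in ball z r, ‖(⨍ y in ball (W.center j) (W.radius j), u y ∂μ) - a‖ₑ * ‖W.phi j p‖ₑ ∂μ ≤
      D * ∫⁻ p in ball (W.center j) (W.radius j), ‖u p - a‖ₑ
        ∂(μ.restrict (ball z (2 * r) ∩ Ω)) := by
  set B := ball (W.center j) (W.radius j)
  by_cases hmeet : (ball (W.center j) (2 * W.radius j) ∩ ball z r).Nonempty
  · have hBT : B ⊆ ball z (2 * r) ∩ Ω := W.ball_subset_of_nonempty_inter hlam hz hmeet
    have hρ := W.radius_pos hΩ hΩc (by linarith) j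
    have huB : IntegrableOn u B μ :=
      .of_lintegral_enorm_sub_ne_top (hu.mono_set (W.ball_subset j)) (hfin _ _ hρ)
        (ne_top_of_le_ne_top hT (lintegral_mono_set hBT))
    have hphi : ∀ p, |W.phi j p| ≤ 1 := fun p =>
      abs_le.2 ⟨by linarith [W.phi_nonneg j p], W.phi_le_one j p⟩
    calc _ = ‖(⨍ y in B, u y ∂μ) - a‖ₑ * ∫⁻ p in ball z r, ‖W.phi j p‖ₑ ∂μ :=
          lintegral_const_mul _ (W.continuous_phi j).measurable.enorm
      _ ≤ ‖(⨍ y in B, u y ∂μ) - a‖ₑ * (D * μ B) := by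
          gcongr
          exact (setLIntegral_enorm_le_measure hphi (W.phi_supp j)).trans (hD _ _ hρ)
      _ = D * (‖(⨍ y in B, u y ∂μ) - a‖ₑ * μ B) := by ring
      _ ≤ D * ∫⁻ p in B, ‖u p - a‖ₑ ∂μ := by
          gcongr
          exact enorm_setAverage_sub_mul_le huB (hfin _ _ hρ) a
      _ = _ := by rw [Measure.restrict_restrict measurableSet_ball, inter_eq_left.2 hBT]
  · have hzero : ∀ p ∈ ball z r, W.phi j p = 0 := fun p hp =>
      W.phi_eq_zero_of_notMem fun h => hmeet ⟨p, h, hp⟩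
    rw [setLIntegral_congr_fun measurableSet_ball fun p hp => by rw [hzero p hp]]
    simp

lemma setLIntegral_enorm_discreteConv_sub_le (hΩ : IsOpen Ω) (hΩc : Ωᶜ.Nonempty)
    (hlam : 1 ≤ lam) (hD : ∀ x (r : ℝ), 0 < r → μ (ball x (2 * r)) ≤ D * μ (ball x r))
    (hfin : ∀ x (r : ℝ), 0 < r → μ (ball x r) ≠ ⊤) {u : X → ℝ}
    (hu : AEStronglyMeasurable u (μ.restrict Ω)) {a : ℝ} {z : X} (hz : z ∉ Ω) {r : ℝ}
    (hT : ∫⁻ p in ball z (2 * r) ∩ Ω, ‖u p - a‖ₑ ∂μ ≠ ⊤) :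
    ∫⁻ p in ball z r ∩ Ω, ‖discreteConv μ W u p - a‖ₑ ∂μ ≤
      D * (C₀ * ∫⁻ p in ball z (2 * r) ∩ Ω, ‖u p - a‖ₑ ∂μ) := by
  set T := ball z (2 * r) ∩ Ω
  set g := fun j p => ‖(⨍ y in ball (W.center j) (W.radius j), u y ∂μ) - a‖ₑ * ‖W.phi j p‖ₑ
  calc ∫⁻ p in ball z r ∩ Ω, ‖discreteConv μ W u p - a‖ₑ ∂μ
      ≤ ∫⁻ p in ball z r, ∑' j, g j p ∂μ :=
        (setLIntegral_mono' (isOpen_ball.inter hΩ).measurableSet fun p hp =>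
          W.enorm_discreteConv_sub_le hlam u a hp.2).trans (lintegral_mono_set inter_subset_left)
    _ = ∑' j, ∫⁻ p in ball z r, g j p ∂μ :=
        lintegral_tsum fun j =>
          (measurable_const.mul (W.continuous_phi j).measurable.enorm).aemeasurable
    _ ≤ ∑' j, D * ∫⁻ p in ball (W.center j) (W.radius j), ‖u p - a‖ₑ ∂(μ.restrict T) :=
        ENNReal.tsum_le_tsum fun j =>
          W.setLIntegral_enorm_average_sub_mul_phi_le hΩ hΩc hlam hD hfin hu hz hT j
    _ = D * ∑' j, ∫⁻ p in ball (W.center j) (W.radius j), ‖u p - a‖ₑ ∂(μ.restrict T) :=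
        ENNReal.tsum_mul_left
    _ ≤ D * (C₀ * ∫⁻ p in T, ‖u p - a‖ₑ ∂μ) := by
        gcongr
        exact tsum_setLIntegral_le_mul_lintegral (fun j => measurableSet_ball)
          (W.encard_setOf_mem_ball_le hlam)
          ((hu.mono_set inter_subset_right).sub aestronglyMeasurable_const).enorm

end WhitneyCovering

/-- There is a constant `C`, depending only on `C_d` and `C₀`, such
that for every `u ∈ L¹_loc(Ω)`, `a ∈ ℝ`, `z ∈ ∂Ω` and `r > 0`, the discrete convolution
`u_W` satisfies `∫_{B(z,r)∩Ω} |u_W − a| dμ ≤ C ∫_{B(z,2r)∩Ω} |u − a| dμ`. -/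
theorem discreteConv_boundary_estimate (C_d : ℝ) (hCd : 1 ≤ C_d) (C₀ : ℕ) :
    ∃ C > (0 : ℝ), ∀ (X : Type) [MetricSpace X] [MeasurableSpace X] [BorelSpace X]
      (μ : Measure X),
      (∀ (x : X) (r : ℝ), 0 < r →
        0 < μ (ball x r) ∧ μ (ball x (2 * r)) ≤ ENNReal.ofReal C_d * μ (ball x r) ∧
          μ (ball x r) < ⊤) →
      ∀ (Ω : Set X), IsOpen Ω → Ω.Nonempty → Ωᶜ.Nonempty →
      ∀ (lam c : ℝ), 1 ≤ lam → 0 < c →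
      ∀ (W : WhitneyCovering X Ω lam C₀ c),
      ∀ u : X → ℝ, LocallyIntegrableOn u Ω μ →
      ∀ (a : ℝ) (z : X), z ∈ frontier Ω → ∀ r : ℝ, 0 < r →
        ∫⁻ p in ball z r ∩ Ω, ENNReal.ofReal |discreteConv μ W u p - a| ∂μ ≤
          ENNReal.ofReal C *
            ∫⁻ p in ball z (2 * r) ∩ Ω, ENNReal.ofReal |u p - a| ∂μ := by
  -- `C_d * C₀` suffices; the `+ 1` only keeps `C` positive when `C₀ = 0`.
  refine ⟨C_d * (C₀ + 1), by positivity, ?_⟩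
  intro X _ _ _ μ hd Ω hΩ _ hΩc lam c hlam _ W u hu a z hz r _
  -- `ENNReal.ofReal C_d` is by definition `↑C_d.toNNReal`.
  have hD x r hr : μ (ball x (2 * r)) ≤ C_d.toNNReal * μ (ball x r) := (hd x r hr).2.1
  have hpos x r hr : μ (ball x r) ≠ 0 := (hd x r hr).1.ne'
  have hfin x r hr : μ (ball x r) ≠ ⊤ := (hd x r hr).2.2.ne
  have hzΩ : z ∉ Ω := by rw [hΩ.frontier_eq] at hz; exact hz.2
  have := secondCountableTopology_of_measure_ball_le hD hpos hfin
  simp only [← Real.enorm_eq_ofReal_abs]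
  by_cases hT : ∫⁻ p in ball z (2 * r) ∩ Ω, ‖u p - a‖ₑ ∂μ = ⊤
  · rw [hT, ENNReal.mul_top (by positivity)]
    exact le_top
  refine (W.setLIntegral_enorm_discreteConv_sub_le hΩ hΩc hlam hD hfin hu.aestronglyMeasurable
    hzΩ hT).trans ?_
  rw [← mul_assoc, ENNReal.ofReal_mul (by linarith), ← ENNReal.ofReal_natCast]
  gcongr
  · exact le_rfl
  · linarith
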